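/- arXiv:1510.02628 — 2 statements merged into one kernel-verified Lean document; each statement's English description precedes it below -/
import Mathlib

section
/- Let n ≥ 2 and let Δ be a triangulation of [n]. For (k,i),(k,j) ∈ Δ set u_{ij}^k := t_{ki}⁻¹t_{kj} ∈ 𝕋_Δ, and let 𝕌_Δ be the subgroup of 𝕋_Δ generated by all such elements u_{ij}^k. Then there is a group isomorphism from 𝕋_Δ onto the free product F_n ∗ 𝕌_Δ (the coproduct of the free group F_n on generators c₁,…,c_n with 𝕌_Δ) which sends t_{ij} to ι₁(c_i)·ι₂(u_{i⁻,j}^i) for every (i,j) ∈ Δ, where ι₁, ι₂ are the canonical inclusions of the two factors and u_{i⁻,j}^i = t_{i,i⁻}⁻¹t_{ij}. -/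
open scoped Classical

noncomputable section

namespace NCPolygon

/-- Cyclic successor on `Fin n` (the vertices of the `n`-gon in cyclic order). -/
def csucc {n : ℕ} (i : Fin n) : Fin n :=
  ⟨(i.1 + 1) % n, Nat.mod_lt _ (Nat.lt_of_le_of_lt (Nat.zero_le _) i.isLt)⟩

/-- Cyclic predecessor on `Fin n`. -/
def cpred {n : ℕ} (i : Fin n) : Fin n :=
  ⟨(i.1 + (n - 1)) % n, Nat.mod_lt _ (Nat.lt_of_le_of_lt (Nat.zero_le _) i.isLt)⟩

/-- A list of elements of `Fin n` is *cyclic* if its entries are distinct and some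
cyclic rotation of it is strictly increasing. -/
def IsCyclicSeq {n : ℕ} (l : List (Fin n)) : Prop :=
  l.Nodup ∧ ∃ k : ℕ, (l.rotate k).Pairwise (· < ·)

/-- The pair `(i,k)` crosses `(j,l)` iff `(i,j,k,l)` is cyclic. -/
def Crosses {n : ℕ} (p q : Fin n × Fin n) : Prop :=
  IsCyclicSeq [p.1, q.1, p.2, q.2]

def NonCrossing {n : ℕ} (Δ : Set (Fin n × Fin n)) : Prop :=
  (∀ p ∈ Δ, p.1 ≠ p.2) ∧ ∀ p ∈ Δ, ∀ q ∈ Δ, ¬ Crosses p q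

/-- A triangulation of the `n`-gon: a maximal crossing-free set of (directed) chords. -/
def IsTriangulation {n : ℕ} (Δ : Set (Fin n × Fin n)) : Prop :=
  NonCrossing Δ ∧ ∀ Δ' : Set (Fin n × Fin n), NonCrossing Δ' → Δ ⊆ Δ' → Δ' = Δ

/-! ### The noncommutative polygon algebra `𝒜_n` -/

abbrev OffD (n : ℕ) := {p : Fin n × Fin n // p.1 ≠ p.2}

abbrev AGen (n : ℕ) := OffD n ⊕ OffD n

def xF {n : ℕ} (i j : Fin n) : FreeAlgebra ℚ (AGen n) :=
  if h : i ≠ j then FreeAlgebra.ι ℚ (Sum.inl ⟨(i, j), h⟩) else 1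

def xiF {n : ℕ} (i j : Fin n) : FreeAlgebra ℚ (AGen n) :=
  if h : i ≠ j then FreeAlgebra.ι ℚ (Sum.inr ⟨(i, j), h⟩) else 1

/-- The defining relations of `𝒜_n`: invertibility, triangle, and exchange relations. -/
inductive ARel (n : ℕ) : FreeAlgebra ℚ (AGen n) → FreeAlgebra ℚ (AGen n) → Prop
  | mul_inv {i j : Fin n} (h : i ≠ j) : ARel n (xF i j * xiF i j) 1
  | inv_mul {i j : Fin n} (h : i ≠ j) : ARel n (xiF i j * xF i j) 1
  | triangle {i j k : Fin n} (hij : i ≠ j) (hik : i ≠ k) (hjk : j ≠ k) :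
      ARel n (xF i j * xiF k j * xF k i) (xF i k * xiF j k * xF j i)
  | exchange {i j k l : Fin n} (h : IsCyclicSeq [i, j, k, l]) :
      ARel n (xF j l) (xF j k * xiF i k * xF i l + xF j i * xiF k i * xF k l)

/-- The noncommutative `n`-gon algebra `𝒜_n`. -/
abbrev NCPoly (n : ℕ) := RingQuot (ARel n)

/-- The generator `x_{ij} ∈ 𝒜_n` (junk value `1` when `i = j`). -/
def X {n : ℕ} (i j : Fin n) : NCPoly n :=
  RingQuot.mkAlgHom ℚ (ARel n) (xF i j)

/-- The generator `x_{ij}⁻¹ ∈ 𝒜_n`. -/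
def Xinv {n : ℕ} (i j : Fin n) : NCPoly n :=
  RingQuot.mkAlgHom ℚ (ARel n) (xiF i j)

/-- The noncommutative angle `T_i^{jk} = x_{ji}⁻¹ x_{jk} x_{ik}⁻¹ ∈ 𝒜_n`. -/
def Tang {n : ℕ} (i j k : Fin n) : NCPoly n := Xinv j i * X j k * Xinv i k

/-! ### Triangle groups -/

def tF {n : ℕ} (Δ : Set (Fin n × Fin n)) (i j : Fin n) : FreeGroup Δ :=
  if h : (i, j) ∈ Δ then FreeGroup.of (⟨(i, j), h⟩ : Δ) else 1

/-- The triangle relations of the triangle group `𝕋_Δ`. -/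
def triRels {n : ℕ} (Δ : Set (Fin n × Fin n)) : Set (FreeGroup Δ) :=
  { w | ∃ i j k : Fin n, i ≠ j ∧ i ≠ k ∧ j ≠ k ∧
      (i, j) ∈ Δ ∧ (j, i) ∈ Δ ∧ (i, k) ∈ Δ ∧ (k, i) ∈ Δ ∧ (j, k) ∈ Δ ∧ (k, j) ∈ Δ ∧
      w = tF Δ i j * (tF Δ k j)⁻¹ * tF Δ k i *
        (tF Δ i k * (tF Δ j k)⁻¹ * tF Δ j i)⁻¹ }

/-- The triangle group `𝕋_Δ` of a triangulation `Δ`. -/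
abbrev TriGroup {n : ℕ} (Δ : Set (Fin n × Fin n)) := PresentedGroup (triRels Δ)

/-- The generator `t_{ij} ∈ 𝕋_Δ` (junk value `1` when `(i,j) ∉ Δ`). -/
def tG {n : ℕ} (Δ : Set (Fin n × Fin n)) (i j : Fin n) : TriGroup Δ :=
  if h : (i, j) ∈ Δ then PresentedGroup.of (rels := triRels Δ) ⟨(i, j), h⟩ else 1

/-! ### The big triangle group `𝕋_n` -/

def btF {n : ℕ} (i j : Fin n) : FreeGroup (OffD n) :=
  if h : i ≠ j then FreeGroup.of (⟨(i, j), h⟩ : OffD n) else 1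

def bigRels (n : ℕ) : Set (FreeGroup (OffD n)) :=
  { w | ∃ i j k : Fin n, i ≠ j ∧ i ≠ k ∧ j ≠ k ∧
      w = btF i j * (btF k j)⁻¹ * btF k i * (btF i k * (btF j k)⁻¹ * btF j i)⁻¹ }

/-- The big triangle group `𝕋_n`. -/
abbrev BigTriGroup (n : ℕ) := PresentedGroup (bigRels n)

/-- The generator `t_{ij} ∈ 𝕋_n`. -/
def bigT {n : ℕ} (i j : Fin n) : BigTriGroup n :=
  if h : i ≠ j then PresentedGroup.of (rels := bigRels n) ⟨(i, j), h⟩ else 1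

/-! ### Distinguished subalgebras and subgroups -/

/-- `𝒜_Δ`: the subalgebra of `𝒜_n` generated by all `x_{ij}` together with the
`x_{ij}⁻¹` for `(i,j) ∈ Δ`. -/
def ADelta (n : ℕ) (Δ : Set (Fin n × Fin n)) : Subalgebra ℚ (NCPoly n) :=
  Algebra.adjoin ℚ
    ({a | ∃ i j : Fin n, i ≠ j ∧ a = X i j} ∪ {a | ∃ p ∈ Δ, a = Xinv p.1 p.2})

/-- `𝒬_n`: the subalgebra of `𝒜_n` generated by the `y_{ij}^k = x_{ki}⁻¹ x_{kj}`. -/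
def Qn (n : ℕ) : Subalgebra ℚ (NCPoly n) :=
  Algebra.adjoin ℚ
    {a : NCPoly n | ∃ i j k : Fin n, i ≠ j ∧ i ≠ k ∧ j ≠ k ∧ a = Xinv k i * X k j}

/-- `𝕌_Δ`: the subgroup of `𝕋_Δ` generated by the `u_{ij}^k = t_{ki}⁻¹ t_{kj}`. -/
def UDelta {n : ℕ} (Δ : Set (Fin n × Fin n)) : Subgroup (TriGroup Δ) :=
  Subgroup.closure
    {g | ∃ i j k : Fin n, (k, i) ∈ Δ ∧ (k, j) ∈ Δ ∧ g = (tG Δ k i)⁻¹ * tG Δ k j}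

/-!
The boundary chord `(i, i⁻)` crosses no chord at all, so by maximality it lies in every
triangulation. More generally, fix any chords `(i, b i) ∈ Δ`. The assignment
`t_{ij} ↦ c_i · u^i_{b i, j}` respects the triangle relations: the free letters of both sides
reduce to `c_i`, and the `𝕌_Δ`-parts are `t_{i, b i}⁻¹` times the two sides of the relation in `𝕋_Δ`.
The inverse homomorphism sends `c_i ↦ t_{i, b i}` and includes `𝕌_Δ` into `𝕋_Δ`; the two
composites are the identity on generators since `u^i_{b i, b i} = 1` and `t_{i, b i} u^i_{b i, j} = t_{ij}`.
-/

section Boundary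

variable {n : ℕ}

lemma val_cpred (i : Fin n) : (cpred i).1 = if i.1 = 0 then n - 1 else i.1 - 1 := by
  have hi := i.isLt
  change (i.1 + (n - 1)) % n = _
  split_ifs with h
  · rw [h, zero_add, Nat.mod_eq_of_lt (by omega)]
  · rw [show i.1 + (n - 1) = i.1 - 1 + n by omega, Nat.add_mod_right,
      Nat.mod_eq_of_lt (by omega)]

lemma IsCyclicSeq.lt_cases {a b c d : Fin n} (h : IsCyclicSeq [a, b, c, d]) :
    (a < b ∧ b < c ∧ c < d) ∨ (b < c ∧ c < d ∧ d < a) ∨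
      (c < d ∧ d < a ∧ a < b) ∨ (d < a ∧ a < b ∧ b < c) := by
  obtain ⟨-, k, hk⟩ := h
  rw [← List.rotate_mod] at hk
  have hk4 : k % 4 < 4 := Nat.mod_lt _ (by norm_num)
  generalize k % 4 = m at hk hk4
  interval_cases m <;>
    simp only [List.rotate_cons_succ, List.cons_append, List.nil_append, List.rotate_zero,
      List.pairwise_cons, List.mem_cons, List.not_mem_nil, or_false, forall_eq_or_imp, forall_eq,
      IsEmpty.forall_iff, implies_true, List.Pairwise.nil, and_self, and_true] at hk <;>
    tauto

lemma not_crosses_cpred (i : Fin n) (q : Fin n × Fin n) :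
    ¬ Crosses (i, cpred i) q ∧ ¬ Crosses q (i, cpred i) := by
  have := val_cpred i
  dsimp only [Crosses]
  constructor <;> intro h <;> rcases IsCyclicSeq.lt_cases h with h | h | h | h <;>
    split_ifs at this <;> omega

lemma cpred_ne (hn : 2 ≤ n) (i : Fin n) : i ≠ cpred i := by
  intro h
  have := congrArg Fin.val h
  rw [val_cpred] at this
  split_ifs at this <;> omega

lemma IsTriangulation.mem_of_not_crosses {Δ : Set (Fin n × Fin n)} (hΔ : IsTriangulation Δ)
    {p : Fin n × Fin n} (hp : p.1 ≠ p.2) (h : ∀ q, ¬ Crosses p q ∧ ¬ Crosses q p) :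
    p ∈ Δ := by
  have hnc : NonCrossing (insert p Δ) := by
    refine ⟨?_, ?_⟩
    · rintro q (rfl | hq)
      exacts [hp, hΔ.1.1 q hq]
    · rintro q (rfl | hq) r (rfl | hr')
      exacts [(h _).1, (h r).1, (h q).2, hΔ.1.2 q hq r hr']
  rw [← hΔ.2 _ hnc (Set.subset_insert p Δ)]
  exact Set.mem_insert p Δ

lemma IsTriangulation.mem_cpred (hn : 2 ≤ n) {Δ : Set (Fin n × Fin n)} (hΔ : IsTriangulation Δ)
    (i : Fin n) : (i, cpred i) ∈ Δ :=
  hΔ.mem_of_not_crosses (cpred_ne hn i) (not_crosses_cpred i)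

end Boundary

section FreeProduct

open Monoid.Coprod

variable {n : ℕ} {Δ : Set (Fin n × Fin n)}

lemma tG_of_mem {i j : Fin n} (h : (i, j) ∈ Δ) :
    tG Δ i j = PresentedGroup.of (rels := triRels Δ) ⟨(i, j), h⟩ :=
  dif_pos h

lemma mk_tF (i j : Fin n) : PresentedGroup.mk (triRels Δ) (tF Δ i j) = tG Δ i j := by
  unfold tF tG
  split_ifs <;> rfl

lemma tG_triangle {i j k : Fin n} (hij : i ≠ j) (hik : i ≠ k) (hjk : j ≠ k)
    (h₁ : (i, j) ∈ Δ) (h₂ : (j, i) ∈ Δ) (h₃ : (i, k) ∈ Δ) (h₄ : (k, i) ∈ Δ)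
    (h₅ : (j, k) ∈ Δ) (h₆ : (k, j) ∈ Δ) :
    tG Δ i j * (tG Δ k j)⁻¹ * tG Δ k i = tG Δ i k * (tG Δ j k)⁻¹ * tG Δ j i := by
  have := PresentedGroup.mk_eq_mk_of_mul_inv_mem
    (show _ ∈ triRels Δ from ⟨i, j, k, hij, hik, hjk, h₁, h₂, h₃, h₄, h₅, h₆, rfl⟩)
  simpa only [map_mul, map_inv, mk_tF] using this

def UDelta.gen {k i j : Fin n} (hki : (k, i) ∈ Δ) (hkj : (k, j) ∈ Δ) : UDelta Δ :=
  ⟨(tG Δ k i)⁻¹ * tG Δ k j, Subgroup.subset_closure ⟨i, j, k, hki, hkj, rfl⟩⟩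

@[simp]
lemma UDelta.coe_gen {k i j : Fin n} (hki : (k, i) ∈ Δ) (hkj : (k, j) ∈ Δ) :
    (UDelta.gen hki hkj : TriGroup Δ) = (tG Δ k i)⁻¹ * tG Δ k j :=
  rfl

lemma UDelta.inv_gen_mul_gen {k a i j : Fin n} (hka : (k, a) ∈ Δ) (hki : (k, i) ∈ Δ)
    (hkj : (k, j) ∈ Δ) : (UDelta.gen hka hki)⁻¹ * UDelta.gen hka hkj = UDelta.gen hki hkj := by
  ext
  simp only [Subgroup.coe_mul, Subgroup.coe_inv, UDelta.coe_gen]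
  group

lemma UDelta.closure_gen : Subgroup.closure
    {u : UDelta Δ | ∃ (k i j : Fin n) (hki : (k, i) ∈ Δ) (hkj : (k, j) ∈ Δ),
      u = UDelta.gen hki hkj} = ⊤ := by
  refine Eq.trans (congrArg Subgroup.closure ?_) Subgroup.closure_closure_coe_preimage
  ext u
  constructor
  · rintro ⟨k, i, j, hki, hkj, rfl⟩
    exact ⟨i, j, k, hki, hkj, rfl⟩
  · rintro ⟨i, j, k, hki, hkj, hu⟩
    exact ⟨k, i, j, hki, hkj, Subtype.ext hu⟩

variable {b : Fin n → Fin n}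

def toCoprodGen (hb : ∀ i, (i, b i) ∈ Δ) (p : Δ) : FreeGroup (Fin n) ∗ UDelta Δ :=
  inl (.of p.1.1) * inr (UDelta.gen (hb p.1.1) p.2)

lemma lift_toCoprodGen_tF (hb : ∀ i, (i, b i) ∈ Δ) {i j : Fin n} (h : (i, j) ∈ Δ) :
    FreeGroup.lift (toCoprodGen hb) (tF Δ i j) = inl (.of i) * inr (UDelta.gen (hb i) h) := by
  rw [tF, dif_pos h, FreeGroup.lift_apply_of]
  rfl

lemma mul_mul_inv_mul_mul_eq {G : Type*} [Group G] (x y u v w : G) :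
    x * u * (y * v)⁻¹ * (y * w) = x * (u * v⁻¹ * w) := by
  group

lemma lift_toCoprodGen_triRels (hb : ∀ i, (i, b i) ∈ Δ) :
    ∀ r ∈ triRels Δ, FreeGroup.lift (toCoprodGen hb) r = 1 := by
  rintro _ ⟨i, j, k, hij, hik, hjk, h₁, h₂, h₃, h₄, h₅, h₆, rfl⟩
  have key : UDelta.gen (hb i) h₁ * (UDelta.gen (hb k) h₆)⁻¹ * UDelta.gen (hb k) h₄ =
      UDelta.gen (hb i) h₃ * (UDelta.gen (hb j) h₅)⁻¹ * UDelta.gen (hb j) h₂ := by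
    ext
    simp only [Subgroup.coe_mul, Subgroup.coe_inv, UDelta.coe_gen]
    calc (tG Δ i (b i))⁻¹ * tG Δ i j * ((tG Δ k (b k))⁻¹ * tG Δ k j)⁻¹ *
          ((tG Δ k (b k))⁻¹ * tG Δ k i)
        = (tG Δ i (b i))⁻¹ * (tG Δ i j * (tG Δ k j)⁻¹ * tG Δ k i) := by group
      _ = (tG Δ i (b i))⁻¹ * (tG Δ i k * (tG Δ j k)⁻¹ * tG Δ j i) := by
        rw [tG_triangle hij hik hjk h₁ h₂ h₃ h₄ h₅ h₆]
      _ = (tG Δ i (b i))⁻¹ * tG Δ i k * ((tG Δ j (b j))⁻¹ * tG Δ j k)⁻¹ *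
          ((tG Δ j (b j))⁻¹ * tG Δ j i) := by group
  rw [map_mul, map_inv, mul_inv_eq_one, map_mul, map_mul, map_inv, map_mul, map_mul, map_inv,
    lift_toCoprodGen_tF hb h₁, lift_toCoprodGen_tF hb h₆, lift_toCoprodGen_tF hb h₄,
    lift_toCoprodGen_tF hb h₃, lift_toCoprodGen_tF hb h₅, lift_toCoprodGen_tF hb h₂,
    mul_mul_inv_mul_mul_eq, mul_mul_inv_mul_mul_eq, ← map_inv, ← map_mul, ← map_mul, ← map_inv,
    ← map_mul, ← map_mul, key]

def toCoprod (hb : ∀ i, (i, b i) ∈ Δ) : TriGroup Δ →* FreeGroup (Fin n) ∗ UDelta Δ :=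
  PresentedGroup.toGroup (lift_toCoprodGen_triRels hb)

def ofCoprod (b : Fin n → Fin n) : FreeGroup (Fin n) ∗ UDelta Δ →* TriGroup Δ :=
  lift (FreeGroup.lift fun i => tG Δ i (b i)) (UDelta Δ).subtype

lemma toCoprod_tG (hb : ∀ i, (i, b i) ∈ Δ) {i j : Fin n} (h : (i, j) ∈ Δ) :
    toCoprod hb (tG Δ i j) = inl (.of i) * inr (UDelta.gen (hb i) h) := by
  rw [tG_of_mem h, toCoprod, PresentedGroup.toGroup.of]
  rfl

lemma toCoprod_coe (hb : ∀ i, (i, b i) ∈ Δ) (u : UDelta Δ) : toCoprod hb u = inr u := by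
  suffices (toCoprod hb).comp (UDelta Δ).subtype = inr from DFunLike.congr_fun this u
  refine MonoidHom.eq_of_eqOn_dense UDelta.closure_gen ?_
  rintro _ ⟨k, i, j, hki, hkj, rfl⟩
  rw [MonoidHom.comp_apply, Subgroup.coe_subtype, UDelta.coe_gen, map_mul, map_inv,
    toCoprod_tG hb hki, toCoprod_tG hb hkj, mul_inv_rev, mul_assoc, inv_mul_cancel_left,
    ← map_inv, ← map_mul, UDelta.inv_gen_mul_gen]

lemma ofCoprod_comp_toCoprod (hb : ∀ i, (i, b i) ∈ Δ) :
    (ofCoprod b).comp (toCoprod hb) = MonoidHom.id (TriGroup Δ) := by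
  refine PresentedGroup.ext fun ⟨⟨i, j⟩, h⟩ ↦ ?_
  rw [MonoidHom.comp_apply, ← tG_of_mem h, toCoprod_tG hb h, map_mul, ofCoprod, lift_apply_inl,
    lift_apply_inr, FreeGroup.lift_apply_of, Subgroup.coe_subtype, UDelta.coe_gen,
    mul_inv_cancel_left, MonoidHom.id_apply]

lemma toCoprod_comp_ofCoprod (hb : ∀ i, (i, b i) ∈ Δ) :
    (toCoprod hb).comp (ofCoprod b) = MonoidHom.id (FreeGroup (Fin n) ∗ UDelta Δ) := by
  refine hom_ext (FreeGroup.ext_hom _ _ fun i ↦ ?_) (MonoidHom.ext fun u ↦ ?_)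
  · have hgen_self : UDelta.gen (hb i) (hb i) = 1 := Subtype.ext (inv_mul_cancel _)
    simp [ofCoprod, toCoprod_tG hb (hb i), hgen_self]
  · simp [ofCoprod, toCoprod_coe]

def triGroupEquivCoprod (hb : ∀ i, (i, b i) ∈ Δ) : TriGroup Δ ≃* FreeGroup (Fin n) ∗ UDelta Δ :=
  MonoidHom.toMulEquiv _ _ (ofCoprod_comp_toCoprod hb) (toCoprod_comp_ofCoprod hb)

end FreeProduct

/-- For every triangulation `Δ` of `[n]`, the group `𝕋_Δ` is isomorphic
to the free product `F_n ∗ 𝕌_Δ`, via an isomorphism sending `t_{ij}` to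
`c_i * u_{i⁻,j}^i` where `u_{i⁻,j}^i = t_{i,i⁻}⁻¹ t_{ij} ∈ 𝕌_Δ`. -/
theorem triangle_group_free_product (n : ℕ) (hn : 2 ≤ n) (Δ : Set (Fin n × Fin n))
    (hΔ : IsTriangulation Δ) :
    ∃ e : TriGroup Δ ≃* Monoid.Coprod (FreeGroup (Fin n)) (UDelta Δ),
      ∀ i j : Fin n, (i, j) ∈ Δ →
        ∃ u : UDelta Δ, (u : TriGroup Δ) = (tG Δ i (cpred i))⁻¹ * tG Δ i j ∧
          e (tG Δ i j) = Monoid.Coprod.inl (FreeGroup.of i) * Monoid.Coprod.inr u :=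
  ⟨triGroupEquivCoprod (hΔ.mem_cpred hn), fun _ _ h ↦
    ⟨_, UDelta.coe_gen _ h, toCoprod_tG (hΔ.mem_cpred hn) h⟩⟩

end NCPolygon
end
end

section
/- Let k ≥ 3 be an odd integer and let G be the free group on the 2k+1 generators D, D̄, C₁, …, C_{k−1}, U₁, …, U_k; extend the C's to all integers by C_{n+k−1} = C_n for every n ∈ ℤ. Then there exists a family (u_n)_{n∈ℤ} of elements of the integral group ring ℤ[G] such that: (1) u_n = U_n (the corresponding free generator, viewed in ℤ[G]) for 1 ≤ n ≤ k; (2) every u_n is a finite sum of elements of G, i.e., all coefficients of u_n are nonnegative integers; (3) for every n ∈ ℤ, if n is even then u_{n−k}·D·u_n = C_n + u_{n−1}·D̄·u_{n+1−k}, and if n is odd then u_n·D̄·u_{n−k} = C_n + u_{n+1−k}·D·u_{n−1}; and (4) there exists H ∈ ℤ[G] (a noncommutative conserved quantity) such that for every n ∈ ℤ, if n is even then D̄·u_{n+1−k} + D·u_{n+k−1} = H·u_n, and if n is odd then u_{n+1−k}·D + u_{n+k−1}·D̄ = u_n·H. -/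
noncomputable section

/-- The `2k+1` free generators `D, D̄, C₁, …, C_{k-1}, U₁, …, U_k`.
(`C i` stands for `C_{i+1}` and `U i` for `U_{i+1}`.) -/
inductive KGen (k : ℕ) : Type
  | D : KGen k
  | Dbar : KGen k
  | C : Fin (k - 1) → KGen k
  | U : Fin k → KGen k

/-- The free group `F_{2k+1}` on the above generators. -/
abbrev KG (k : ℕ) := FreeGroup (KGen k)

/-- The integral group ring `ℤ F_{2k+1}`. -/
abbrev KAlg (k : ℕ) := MonoidAlgebra ℤ (KG k)

def Dk (k : ℕ) : KAlg k := MonoidAlgebra.of ℤ (KG k) (FreeGroup.of KGen.D)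

def Dbark (k : ℕ) : KAlg k := MonoidAlgebra.of ℤ (KG k) (FreeGroup.of KGen.Dbar)

/-- `C_n` for `n ∈ ℤ`, extended `(k-1)`-periodically: `C_{n+k-1} = C_n`. -/
def Ck (k : ℕ) (hk : 3 ≤ k) (n : ℤ) : KAlg k :=
  MonoidAlgebra.of ℤ (KG k)
    (FreeGroup.of (KGen.C ⟨((n - 1) % ((k : ℤ) - 1)).toNat, by
      have h1 : (0 : ℤ) < (k : ℤ) - 1 := by
        have : (3 : ℤ) ≤ (k : ℤ) := by exact_mod_cast hk
        omega
      have h2 := Int.emod_lt_of_pos (n - 1) h1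
      have h3 := Int.emod_nonneg (n - 1) (by omega : ((k : ℤ) - 1) ≠ 0)
      omega⟩))

/-!
The sequence is built in three pieces. On the window `2 - k ≤ n ≤ 0` the quadratic relations
at `2, …, k` can be solved backwards for `u_n`, starting from `u_1, …, u_k = U_1, …, U_k`; `H` is
then read off from the linear relation at `n = 1`, and for `n > k` the linear relations define
`u_n`. For `n < 2 - k` we set `u_n = φ (u_{k+1-n})`, where `φ` is the ring automorphism induced by
the mirror symmetry of the cylinder (`D ↔ D̄`, `U_i ↦ U_{k+1-i}`, `C_n ↦ C_{2k+1-n}`); oddness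
of `k` makes `n ↦ k + 1 - n` and `n ↦ n + k - 1` preserve parity.

The quadratic relation at `n + k - 1` follows from the one at `n` and the linear relations at `n`
and `n - 1` by a ring identity, so both families hold for `n ≥ 2`. The quadratic relations around
the window determine `u_{2-k}, …, u_0` from later terms, which forces `u` to be `φ`-symmetric
everywhere; comparing the linear relations at `1` and `k` then gives `φ H = H`, and the mirror
transports every relation to small `n`.

Positivity is clear on `2 - k ≤ n ≤ 2k`, where `u_n` is a sum of products of earlier terms and
group elements (the quadratic relation is solved for `u_n`, `u_{n-k}` being a generator). Beyond,
along each residue class mod `k - 1` the linear relation for even `n` reads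
`x_{j+2} = (P + q) x_{j+1} - w x_j`, where `D⁻¹ H = P + q` with `P` positive and `q`, `w` group
elements (for odd `n`, similarly with `H D̄⁻¹` acting on the right). This keeps `x_j` and
`q x_{j+1} - w x_j` positive once `q P - w` and the first difference are, and both reduce to
`u_{2-k}` and `u_n` (`k ≤ n < 2k`) containing a specific group element with coefficient one
(`leadingTerm`), which cancels the subtracted term.
-/

namespace MonoidAlgebra

theorem isUnit_of {G : Type*} [Group G] (g : G) : IsUnit (of ℤ G g) := (Group.isUnit g).map _

variable (G : Type*) [Monoid G]

def nonnegCone : Subsemiring (MonoidAlgebra ℤ G) :=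
  (MonoidHom.mrange (of ℤ G)).subsemiringClosure

variable {G}

theorem of_mem_nonnegCone (g : G) : of ℤ G g ∈ nonnegCone G :=
  AddSubmonoid.subset_closure ⟨g, rfl⟩

theorem exists_multiset_of_mem_nonnegCone {x : MonoidAlgebra ℤ G} (hx : x ∈ nonnegCone G) :
    ∃ s : Multiset G, x = (s.map (of ℤ G)).sum := by
  induction hx using AddSubmonoid.closure_induction with
  | mem _ hy => obtain ⟨g, rfl⟩ := hy; exact ⟨{g}, by simp⟩
  | zero => exact ⟨0, by simp⟩
  | add _ _ _ _ hx hy =>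
    obtain ⟨s, rfl⟩ := hx
    obtain ⟨t, rfl⟩ := hy
    exact ⟨s + t, by simp⟩

theorem mapDomainRingHom_mem_nonnegCone {H : Type*} [Monoid H] (f : G →* H)
    {x : MonoidAlgebra ℤ G} (hx : x ∈ nonnegCone G) :
    mapDomainRingHom ℤ f x ∈ nonnegCone H := by
  obtain ⟨s, rfl⟩ := exists_multiset_of_mem_nonnegCone hx
  rw [map_multiset_sum, Multiset.map_map]
  exact multiset_sum_mem _ fun y hy => by
    obtain ⟨g, -, rfl⟩ := Multiset.mem_map.mp hy
    simpa using of_mem_nonnegCone (f g)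

end MonoidAlgebra

section Recurrence

variable {R : Type*} [Ring R] (S : Subsemiring R)

theorem mem_of_linear_recurrence_left {x : ℕ → R} {P Q w : R} (hP : P ∈ S) (hQ : Q ∈ S)
    (hQP : Q * P - w ∈ S) (hrec : ∀ j, x (j + 2) = (P + Q) * x (j + 1) - w * x j)
    (h1 : x 1 ∈ S) (hV : Q * x 1 - w * x 0 ∈ S) (j : ℕ) : x (j + 1) ∈ S := by
  suffices ∀ j, x (j + 1) ∈ S ∧ Q * x (j + 1) - w * x j ∈ S from (this j).1
  intro j
  induction j with
  | zero => exact ⟨h1, hV⟩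
  | succ j ih =>
    have hx : x (j + 2) = P * x (j + 1) + (Q * x (j + 1) - w * x j) := by
      rw [hrec]; noncomm_ring
    refine ⟨hx ▸ add_mem (mul_mem hP ih.1) ih.2, ?_⟩
    have hV' : Q * x (j + 2) - w * x (j + 1) =
        (Q * P - w) * x (j + 1) + Q * (Q * x (j + 1) - w * x j) := by
      rw [hx]; noncomm_ring
    exact hV' ▸ add_mem (mul_mem hQP ih.1) (mul_mem hQ ih.2)

theorem mem_of_linear_recurrence_right {x : ℕ → R} {P Q w : R} (hP : P ∈ S) (hQ : Q ∈ S)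
    (hPQ : P * Q - w ∈ S) (hrec : ∀ j, x (j + 2) = x (j + 1) * (P + Q) - x j * w)
    (h1 : x 1 ∈ S) (hV : x 1 * Q - x 0 * w ∈ S) (j : ℕ) : x (j + 1) ∈ S := by
  suffices ∀ j, x (j + 1) ∈ S ∧ x (j + 1) * Q - x j * w ∈ S from (this j).1
  intro j
  induction j with
  | zero => exact ⟨h1, hV⟩
  | succ j ih =>
    have hx : x (j + 2) = x (j + 1) * P + (x (j + 1) * Q - x j * w) := by
      rw [hrec]; noncomm_ring
    refine ⟨hx ▸ add_mem (mul_mem ih.1 hP) ih.2, ?_⟩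
    have hV' : x (j + 2) * Q - x (j + 1) * w =
        x (j + 1) * (P * Q - w) + (x (j + 1) * Q - x j * w) * Q := by
      rw [hx]; noncomm_ring
    exact hV' ▸ add_mem (mul_mem ih.1 hPQ) (mul_mem ih.2 hQ)

end Recurrence

section QuadraticStep

variable {R : Type*} [Ring R] {a b c d e f D E H C : R}

theorem quadratic_step_left (hq : a * D * b = C + c * E * d) (hl : E * d + D * e = H * b)
    (hl' : a * D + f * E = c * H) : c * D * e = C + f * E * b :=
  calc c * D * e = c * (H * b) - c * E * d := by rw [← hl]; noncomm_ring
    _ = (a * D + f * E) * b - (a * D * b - C) := by rw [← mul_assoc, ← hl', hq]; noncomm_ring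
    _ = C + f * E * b := by noncomm_ring

theorem quadratic_step_right (hq : b * E * a = C + d * D * c) (hl : d * D + e * E = b * H)
    (hl' : E * a + D * f = H * c) : e * E * c = C + b * D * f :=
  calc e * E * c = b * H * c - d * D * c := by rw [← hl]; noncomm_ring
    _ = b * (E * a + D * f) - (b * E * a - C) := by rw [mul_assoc, ← hl', hq]; noncomm_ring
    _ = C + b * D * f := by noncomm_ring

end QuadraticStep

theorem Int.even_two_mul_add_one_sub_iff (a n : ℤ) : Even (2 * a + 1 - n) ↔ Odd n := by
  simp only [Int.even_iff, Int.odd_iff]; omega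

theorem Int.odd_two_mul_add_one_sub_iff (a n : ℤ) : Odd (2 * a + 1 - n) ↔ Even n := by
  simp only [Int.even_iff, Int.odd_iff]; omega

namespace KontsevichRecursion

open MonoidAlgebra

variable {k : ℕ}

theorem even_add_mul_pred_iff (ko : Odd k) (n j : ℤ) : Even (n + j * (k - 1)) ↔ Even n := by
  have : Even (j * ((k : ℤ) - 1)) := ((Int.odd_coe_nat k).mpr ko |>.sub_odd odd_one).mul_left j
  simp [Int.even_add, this]

theorem even_add_pred_iff (ko : Odd k) (n : ℤ) : Even (n + (k - 1)) ↔ Even n := by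
  simpa using even_add_mul_pred_iff ko n 1

theorem odd_add_pred_iff (ko : Odd k) (n : ℤ) : Odd (n + (k - 1)) ↔ Odd n := by
  rw [← Int.not_even_iff_odd, ← Int.not_even_iff_odd, even_add_pred_iff ko]

theorem even_mirror_iff (ko : Odd k) (n : ℤ) : Even (k + 1 - n) ↔ Even n := by
  have := Int.odd_iff.mp (Int.odd_coe_nat k |>.mpr ko); simp only [Int.even_iff]; omega

theorem odd_mirror_iff (ko : Odd k) (n : ℤ) : Odd (k + 1 - n) ↔ Odd n := by
  have := Int.odd_iff.mp (Int.odd_coe_nat k |>.mpr ko); simp only [Int.odd_iff]; omega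

def gD : KG k := FreeGroup.of .D

def gDbar : KG k := FreeGroup.of .Dbar

/-- `U_n`; only meaningful for `1 ≤ n ≤ k`. -/
def gU (n : ℤ) : KG k :=
  if h : 0 < k then FreeGroup.of (.U ⟨(n - 1).toNat % k, Nat.mod_lt _ h⟩) else 1

theorem Dk_eq : Dk k = of ℤ _ gD := rfl

theorem Dbark_eq : Dbark k = of ℤ _ gDbar := rfl

theorem gU_eq {n : ℤ} (h : (n - 1).toNat < k) :
    gU n = FreeGroup.of (KGen.U ⟨(n - 1).toNat, h⟩) := by
  rw [gU, dif_pos (by omega)]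
  congr 3
  exact Nat.mod_eq_of_lt h

variable (hk : 3 ≤ k)

def cIndex (n : ℤ) : Fin (k - 1) :=
  ⟨((n - 1) % ((k : ℤ) - 1)).toNat, by
    have := Int.emod_lt_of_pos (n - 1) (by omega : (0 : ℤ) < k - 1)
    omega⟩

theorem Ck_eq (n : ℤ) : Ck k hk n = of ℤ _ (FreeGroup.of (.C (cIndex hk n))) := rfl

theorem cIndex_congr {a b : ℤ} (h : a ≡ b [ZMOD (k - 1)]) : cIndex hk a = cIndex hk b := by
  simp only [cIndex, (h.sub_right 1).eq]

theorem cIndex_modEq (n : ℤ) : ((cIndex hk n : ℕ) : ℤ) ≡ n - 1 [ZMOD (k - 1)] := by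
  rw [cIndex, Fin.val_mk, Int.toNat_of_nonneg (Int.emod_nonneg _ (by omega))]
  exact Int.mod_modEq _ _

theorem cIndex_val_add_one (i : Fin (k - 1)) : cIndex hk ((i : ℕ) + 1) = i := by
  have := i.isLt
  ext
  simp only [cIndex, add_sub_cancel_right]
  rw [Int.emod_eq_of_lt (by omega) (by omega)]
  simp

theorem Ck_add_period (n : ℤ) : Ck k hk (n + (k - 1)) = Ck k hk n := by
  rw [Ck_eq, Ck_eq, cIndex_congr hk (Int.add_modEq_right)]

/-- On the `C`'s this is `C_n ↦ C_{2k+1-n}`, recalling that `C i` stands for `C_{i+1}`. -/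
def mirrorGen : KGen k → KGen k
  | .D => .Dbar
  | .Dbar => .D
  | .U i => .U i.rev
  | .C i => .C (cIndex hk (2 * k - i))

theorem cIndex_mirror (n : ℤ) : cIndex hk (2 * k - cIndex hk n) = cIndex hk (2 * k + 1 - n) :=
  cIndex_congr hk (by simpa [sub_sub_eq_add_sub] using (cIndex_modEq hk n).sub_left (2 * k))

theorem mirrorGen_involutive : Function.Involutive (mirrorGen hk) := by
  rintro (_ | _ | i | i)
  · rfl
  · rfl
  · simp only [mirrorGen]
    rw [cIndex_mirror, show (2 * k + 1 - (2 * k - i) : ℤ) = i + 1 by ring, cIndex_val_add_one]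
  · simp [mirrorGen]

def mirrorHom : KG k →* KG k := FreeGroup.map (mirrorGen hk)

def mirror : KAlg k →+* KAlg k := mapDomainRingHom ℤ (mirrorHom hk)

theorem mirror_of (g : KG k) : mirror hk (of ℤ _ g) = of ℤ _ (mirrorHom hk g) := by
  simp [mirror]

theorem mirror_mirror (x : KAlg k) : mirror hk (mirror hk x) = x := by
  have : (mirrorHom hk).comp (mirrorHom hk) = MonoidHom.id _ :=
    FreeGroup.ext_hom _ _ fun a => by simp [mirrorHom, mirrorGen_involutive hk a]
  rw [mirror, ← RingHom.comp_apply, ← mapDomainRingHom_comp, this, mapDomainRingHom_id,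
    RingHom.id_apply]

theorem mirror_mem_nonnegCone {x : KAlg k} (hx : x ∈ nonnegCone (KG k)) :
    mirror hk x ∈ nonnegCone (KG k) :=
  mapDomainRingHom_mem_nonnegCone _ hx

@[simp] theorem mirrorHom_gD : mirrorHom hk gD = gDbar := FreeGroup.map.of

@[simp] theorem mirrorHom_gDbar : mirrorHom hk gDbar = gD := FreeGroup.map.of

theorem mirrorHom_gU {n : ℤ} (h1 : 1 ≤ n) (h2 : n ≤ k) :
    mirrorHom hk (gU n) = gU (k + 1 - n) := by
  rw [gU_eq (n := n) (by omega), gU_eq (n := k + 1 - n) (by omega), mirrorHom, FreeGroup.map.of]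
  simp only [mirrorGen]
  congr 2
  ext
  simp only [Fin.val_rev]
  omega

@[simp] theorem mirror_Dk : mirror hk (Dk k) = Dbark k := by
  rw [Dk_eq, mirror_of, mirrorHom_gD]; rfl

@[simp] theorem mirror_Dbark : mirror hk (Dbark k) = Dk k := by
  rw [Dbark_eq, mirror_of, mirrorHom_gDbar]; rfl

@[simp] theorem mirror_Ck (n : ℤ) : mirror hk (Ck k hk n) = Ck k hk (2 * k + 1 - n) := by
  rw [Ck_eq, Ck_eq, mirror_of, mirrorHom, FreeGroup.map.of, mirrorGen, cIndex_mirror]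

/-- `backSeq j` is `u_{1-j}`, solved from the quadratic relation at index `k - j`. -/
def backSeq : ℕ → KAlg k
  | 0 => of ℤ _ (gU 1)
  | j + 1 =>
    if Even ((k : ℤ) - j) then
      (Ck k hk (k - j) + of ℤ _ (gU (k - j - 1) * gDbar) * backSeq j) *
        of ℤ _ (gD * gU (k - j))⁻¹
    else
      of ℤ _ (gU (k - j) * gDbar)⁻¹ *
        (Ck k hk (k - j) + backSeq j * of ℤ _ (gD * gU (k - j - 1)))

/-- `H`, read off from the linear relation at `n = 1`. -/
def conserved : KAlg k :=
  of ℤ _ (gU 1)⁻¹ * (backSeq hk (k - 1) * Dk k + of ℤ _ (gU k * gDbar))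

/-- `u_n` for `n ≥ 2 - k`: beyond `k` it is solved from the linear relation at `n - (k - 1)`. -/
def fwdSeq (n : ℤ) : KAlg k :=
  if n ≤ 0 then backSeq hk (1 - n).toNat
  else if n ≤ k then of ℤ _ (gU n)
  else if Even n then
    of ℤ _ gD⁻¹ * (conserved hk * fwdSeq (n - (k - 1)) - Dbark k * fwdSeq (n - 2 * (k - 1)))
  else (fwdSeq (n - (k - 1)) * conserved hk - fwdSeq (n - 2 * (k - 1)) * Dk k) * of ℤ _ gDbar⁻¹
termination_by (n + k).toNat
decreasing_by all_goals omega

/-- Below `2 - k` the mirror symmetry `u_n = φ (u_{k+1-n})` is imposed. -/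
def seq (n : ℤ) : KAlg k :=
  if 2 - (k : ℤ) ≤ n then fwdSeq hk n else mirror hk (fwdSeq hk (k + 1 - n))

theorem seq_eq_fwdSeq {n : ℤ} (h : 2 - (k : ℤ) ≤ n) : seq hk n = fwdSeq hk n := if_pos h

theorem seq_eq_mirror_of_lt {n : ℤ} (h : n < 2 - (k : ℤ)) :
    seq hk n = mirror hk (seq hk (k + 1 - n)) := by
  rw [seq, if_neg (by omega), seq_eq_fwdSeq hk (by omega)]

theorem seq_eq_gU {n : ℤ} (h1 : 1 ≤ n) (h2 : n ≤ k) : seq hk n = of ℤ _ (gU n) := by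
  rw [seq_eq_fwdSeq hk (by omega), fwdSeq, if_neg (by omega), if_pos h2]

theorem seq_one_sub_eq_backSeq {j : ℕ} (hj : j ≤ k - 1) : seq hk (1 - j) = backSeq hk j := by
  rcases j with _ | j
  · simp [seq_eq_gU hk le_rfl (by omega), backSeq]
  · rw [seq_eq_fwdSeq hk (by omega), fwdSeq, if_pos (by omega)]
    congr
    omega

theorem seq_add_of_even {n : ℤ} (hn : 2 ≤ n) (he : Even (n + (k - 1))) :
    seq hk (n + (k - 1)) =
      of ℤ _ gD⁻¹ * (conserved hk * seq hk n - Dbark k * seq hk (n + 1 - k)) := by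
  rw [seq_eq_fwdSeq hk (by omega), fwdSeq, if_neg (by omega), if_neg (by omega), if_pos he,
    seq_eq_fwdSeq hk (by omega), seq_eq_fwdSeq hk (by omega)]
  congr 4 <;> ring

theorem seq_add_of_odd {n : ℤ} (hn : 2 ≤ n) (ho : Odd (n + (k - 1))) :
    seq hk (n + (k - 1)) =
      (seq hk n * conserved hk - seq hk (n + 1 - k) * Dk k) * of ℤ _ gDbar⁻¹ := by
  rw [seq_eq_fwdSeq hk (by omega), fwdSeq, if_neg (by omega), if_neg (by omega),
    if_neg (Int.not_even_iff_odd.mpr ho),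
    seq_eq_fwdSeq hk (by omega), seq_eq_fwdSeq hk (by omega)]
  congr 4 <;> ring

def QuadRel (v : ℤ → KAlg k) (n : ℤ) : Prop :=
  (Even n → v (n - k) * Dk k * v n = Ck k hk n + v (n - 1) * Dbark k * v (n + 1 - k)) ∧
  (Odd n → v n * Dbark k * v (n - k) = Ck k hk n + v (n + 1 - k) * Dk k * v (n - 1))

def LinRel (v : ℤ → KAlg k) (H : KAlg k) (n : ℤ) : Prop :=
  (Even n → Dbark k * v (n + 1 - k) + Dk k * v (n + k - 1) = H * v n) ∧
  (Odd n → v (n + 1 - k) * Dk k + v (n + k - 1) * Dbark k = v n * H)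

theorem quadRel_add_period (ko : Odd k) {v : ℤ → KAlg k} {H : KAlg k} {n : ℤ}
    (hq : QuadRel hk v n) (hl : LinRel v H n) (hl' : LinRel v H (n - 1)) :
    QuadRel hk v (n + (k - 1)) := by
  have e₁ : n + (k - 1) - k = n - 1 := by ring
  have e₂ : n + (k - 1) - 1 = n + k - 2 := by ring
  have e₃ : n + (k - 1) + 1 - k = n := by ring
  have e₄ : n - 1 + 1 - k = n - k := by ring
  have e₅ : n - 1 + k - 1 = n + k - 2 := by ring
  have e₆ : n + k - 1 = n + (k - 1) := by ring
  rw [LinRel, e₄, e₅] at hl'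
  rw [LinRel, e₆] at hl
  rw [QuadRel, e₁, e₂, e₃, Ck_add_period]
  constructor
  · intro he
    have he' := (even_add_pred_iff ko n).mp he
    exact quadratic_step_left (hq.1 he') (hl.1 he') (hl'.2 (he'.sub_odd odd_one))
  · intro ho
    have ho' := (odd_add_pred_iff ko n).mp ho
    exact quadratic_step_right (hq.2 ho') (hl.2 ho') (hl'.1 (ho'.sub_odd odd_one))

theorem linRel_seq_of_pos (ko : Odd k) {n : ℤ} (hn : 1 ≤ n) :
    LinRel (seq hk) (conserved hk) n := by
  rcases hn.eq_or_lt with rfl | hn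
  · refine ⟨fun he => absurd he (by decide), fun _ => ?_⟩
    rw [show (1 : ℤ) + 1 - k = 1 - ((k - 1 : ℕ) : ℤ) by omega,
      seq_one_sub_eq_backSeq hk le_rfl,
      show (1 : ℤ) + k - 1 = k by ring, seq_eq_gU hk le_rfl (by omega),
      seq_eq_gU hk (by omega) le_rfl, conserved, ← mul_assoc, ← map_mul, mul_inv_cancel,
      map_one, one_mul, map_mul, Dbark_eq]
  · rw [LinRel, show n + k - 1 = n + (k - 1) by ring]
    constructor
    · intro he
      rw [seq_add_of_even hk hn ((even_add_pred_iff ko n).mpr he), Dk_eq, ← mul_assoc,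
        ← map_mul, mul_inv_cancel, map_one, one_mul]
      abel
    · intro ho
      rw [seq_add_of_odd hk hn ((odd_add_pred_iff ko n).mpr ho), Dbark_eq, mul_assoc, ← map_mul,
        inv_mul_cancel, map_one, mul_one]
      abel

theorem quadRel_seq_of_two_le_of_le {n : ℤ} (h2 : 2 ≤ n) (hn : n ≤ k) :
    QuadRel hk (seq hk) n := by
  obtain ⟨j, rfl⟩ : ∃ j : ℕ, n = k - j := ⟨(k - n).toNat, by omega⟩
  rw [QuadRel, show (k : ℤ) - j - k = 1 - ((j + 1 : ℕ) : ℤ) by push_cast; ring,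
    show (k : ℤ) - j + 1 - k = 1 - j by ring, seq_one_sub_eq_backSeq hk (by omega),
    seq_one_sub_eq_backSeq hk (by omega), seq_eq_gU hk (by omega) (by omega),
    seq_eq_gU hk (by omega) (by omega), backSeq, Dk_eq, Dbark_eq]
  constructor
  · intro he
    rw [if_pos he, mul_assoc, mul_assoc, ← map_mul, ← map_mul, inv_mul_cancel, map_one,
      mul_one, map_mul]
  · intro ho
    rw [if_neg (Int.not_even_iff_odd.mpr ho), ← map_mul, ← mul_assoc, ← map_mul,
      mul_inv_cancel, map_one, one_mul, mul_assoc, ← map_mul]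

theorem quadRel_seq_of_two_le (ko : Odd k) {n : ℤ} (hn : 2 ≤ n) : QuadRel hk (seq hk) n := by
  by_cases h : n ≤ k
  · exact quadRel_seq_of_two_le_of_le hk hn h
  · have := quadRel_add_period hk ko (quadRel_seq_of_two_le ko (n := n - (k - 1)) (by omega))
      (linRel_seq_of_pos hk ko (by omega)) (linRel_seq_of_pos hk ko (by omega))
    rwa [sub_add_cancel] at this
termination_by n.toNat
decreasing_by omega

def mirrorSeq (v : ℤ → KAlg k) (n : ℤ) : KAlg k := mirror hk (v (k + 1 - n))

theorem quadRel_mirrorSeq {v : ℤ → KAlg k} {n : ℤ} (h : QuadRel hk v n) :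
    QuadRel hk (mirrorSeq hk v) (2 * k + 1 - n) := by
  simp only [QuadRel, mirrorSeq, show (k : ℤ) + 1 - (2 * k + 1 - n - k) = n by ring,
    show (k : ℤ) + 1 - (2 * k + 1 - n) = n - k by ring,
    show (k : ℤ) + 1 - (2 * k + 1 - n + 1 - k) = n - 1 by ring,
    show (k : ℤ) + 1 - (2 * k + 1 - n - 1) = n + 1 - k by ring]
  constructor
  · intro he
    simpa using congrArg (mirror hk) (h.2 ((Int.even_two_mul_add_one_sub_iff k n).mp he))
  · intro ho
    simpa using congrArg (mirror hk) (h.1 ((Int.odd_two_mul_add_one_sub_iff k n).mp ho))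

theorem linRel_mirrorSeq (ko : Odd k) {v : ℤ → KAlg k} {H : KAlg k} {n : ℤ}
    (h : LinRel v H n) :
    LinRel (mirrorSeq hk v) (mirror hk H) (k + 1 - n) := by
  simp only [LinRel, mirrorSeq, show (k : ℤ) + 1 - (k + 1 - n + 1 - k) = n + k - 1 by ring,
    show (k : ℤ) + 1 - (k + 1 - n + k - 1) = n + 1 - k by ring,
    show (k : ℤ) + 1 - (k + 1 - n) = n by ring]
  constructor
  · intro he
    rw [add_comm]
    simpa using congrArg (mirror hk) (h.1 ((even_mirror_iff ko n).mp he))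
  · intro ho
    rw [add_comm]
    simpa using congrArg (mirror hk) (h.2 ((odd_mirror_iff ko n).mp ho))

theorem quadRel_unique {v w : ℤ → KAlg k} {n : ℤ} (hv : QuadRel hk v n) (hw : QuadRel hk w n)
    {g : KG k} (hg : v n = of ℤ _ g) (h₀ : w n = v n) (h₁ : w (n - 1) = v (n - 1))
    (h₂ : w (n + 1 - k) = v (n + 1 - k)) : w (n - k) = v (n - k) := by
  rcases Int.even_or_odd n with he | ho
  · have h := hw.1 he
    rw [h₁, h₂, ← hv.1 he, h₀, hg, mul_assoc, mul_assoc, Dk_eq, ← map_mul] at h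
    exact (isUnit_of _).mul_right_cancel h
  · have h := hw.2 ho
    rw [h₁, h₂, ← hv.2 ho, h₀, hg, Dbark_eq, ← map_mul] at h
    exact (isUnit_of _).mul_left_cancel h

theorem mirrorSeq_seq_of_one_le_of_le {n : ℤ} (h1 : 1 ≤ n) (h2 : n ≤ k) :
    mirrorSeq hk (seq hk) n = seq hk n := by
  rw [mirrorSeq, seq_eq_gU hk (by omega) (by omega), seq_eq_gU hk h1 h2, mirror_of,
    mirrorHom_gU hk (by omega) (by omega), sub_sub_cancel]

theorem mirrorSeq_seq_of_le_one (ko : Odd k) {n : ℤ} (hn : n ≤ 1) :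
    mirrorSeq hk (seq hk) n = seq hk n := by
  by_cases h : n < 2 - k
  · exact (seq_eq_mirror_of_lt hk h).symm
  by_cases h1 : n = 1
  · exact h1 ▸ mirrorSeq_seq_of_one_le_of_le hk le_rfl (by omega)
  have hw := quadRel_mirrorSeq hk (quadRel_seq_of_two_le hk ko (n := k + 1 - n) (by omega))
  rw [show 2 * (k : ℤ) + 1 - (k + 1 - n) = n + k by ring] at hw
  have := quadRel_unique hk (quadRel_seq_of_two_le_of_le hk (by omega) (by omega)) hw
    (seq_eq_gU hk (by omega) (by omega)) (mirrorSeq_seq_of_one_le_of_le hk (by omega) (by omega))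
    (mirrorSeq_seq_of_one_le_of_le hk (by omega) (by omega))
    (by rw [show n + k + 1 - k = n + 1 by ring]; exact mirrorSeq_seq_of_le_one ko (by omega))
  rwa [add_sub_cancel_right] at this
termination_by (1 - n).toNat
decreasing_by omega

theorem mirrorSeq_seq (ko : Odd k) : mirrorSeq hk (seq hk) = seq hk := by
  funext n
  rcases le_or_gt n k with h | h
  · rcases le_or_gt n 1 with h1 | h1
    · exact mirrorSeq_seq_of_le_one hk ko h1
    · exact mirrorSeq_seq_of_one_le_of_le hk h1.le h
  · rw [mirrorSeq, ← mirrorSeq_seq_of_le_one hk ko (n := k + 1 - n) (by omega), mirrorSeq,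
      mirror_mirror, sub_sub_cancel]

theorem seq_mirror (ko : Odd k) (n : ℤ) : seq hk (k + 1 - n) = mirror hk (seq hk n) := by
  conv_rhs => rw [← mirrorSeq_seq hk ko]
  rw [mirrorSeq, mirror_mirror]

theorem mirror_conserved (ko : Odd k) : mirror hk (conserved hk) = conserved hk := by
  have h := linRel_mirrorSeq hk ko (linRel_seq_of_pos hk ko (n := k) (by omega))
  rw [mirrorSeq_seq hk ko, add_sub_cancel_left] at h
  have h' := (linRel_seq_of_pos hk ko le_rfl).2 odd_one
  rw [h.2 odd_one, seq_eq_gU hk le_rfl (by omega)] at h'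
  exact (isUnit_of _).mul_left_cancel h'

theorem linRel_seq (ko : Odd k) (n : ℤ) : LinRel (seq hk) (conserved hk) n := by
  rcases le_or_gt 1 n with h | h
  · exact linRel_seq_of_pos hk ko h
  · have := linRel_mirrorSeq hk ko (linRel_seq_of_pos hk ko (n := k + 1 - n) (by omega))
    rwa [mirrorSeq_seq hk ko, mirror_conserved hk ko, sub_sub_cancel] at this

theorem quadRel_seq (ko : Odd k) (n : ℤ) : QuadRel hk (seq hk) n := by
  rcases le_or_gt 2 n with h | h
  · exact quadRel_seq_of_two_le hk ko h
  · have := quadRel_mirrorSeq hk (quadRel_seq_of_two_le hk ko (n := 2 * k + 1 - n) (by omega))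
    rwa [mirrorSeq_seq hk ko, sub_sub_cancel] at this

theorem Ck_mem (n : ℤ) : Ck k hk n ∈ nonnegCone (KG k) := of_mem_nonnegCone _

theorem backSeq_mem (j : ℕ) : backSeq hk j ∈ nonnegCone (KG k) := by
  induction j with
  | zero => exact of_mem_nonnegCone _
  | succ j ih =>
    rw [backSeq]
    split_ifs
    · exact mul_mem (add_mem (Ck_mem hk _) (mul_mem (of_mem_nonnegCone _) ih))
        (of_mem_nonnegCone _)
    · exact mul_mem (of_mem_nonnegCone _)
        (add_mem (Ck_mem hk _) (mul_mem ih (of_mem_nonnegCone _)))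

theorem seq_eq_of_even (ko : Odd k) {n : ℤ} (h1 : k + 1 ≤ n) (h2 : n ≤ 2 * k) (he : Even n) :
    seq hk n = of ℤ _ (gU (n - k) * gD)⁻¹ *
      (Ck k hk n + seq hk (n - 1) * Dbark k * seq hk (n + 1 - k)) := by
  rw [← (quadRel_seq hk ko n).1 he, seq_eq_gU hk (n := n - k) (by omega) (by omega), Dk_eq,
    ← map_mul, ← mul_assoc, ← map_mul, inv_mul_cancel, map_one, one_mul]

theorem seq_eq_of_odd (ko : Odd k) {n : ℤ} (h1 : k + 1 ≤ n) (h2 : n ≤ 2 * k) (ho : Odd n) :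
    seq hk n = (Ck k hk n + seq hk (n + 1 - k) * Dk k * seq hk (n - 1)) *
      of ℤ _ (gDbar * gU (n - k))⁻¹ := by
  rw [← (quadRel_seq hk ko n).2 ho, seq_eq_gU hk (n := n - k) (by omega) (by omega), Dbark_eq,
    mul_assoc (seq hk n), ← map_mul, mul_assoc, ← map_mul, mul_inv_cancel, map_one, mul_one]

theorem seq_mem_of_le_two_mul (ko : Odd k) {n : ℤ} (h1 : 2 - k ≤ n) (h2 : n ≤ 2 * k) :
    seq hk n ∈ nonnegCone (KG k) := by
  by_cases hn : n ≤ 0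
  · rw [show n = 1 - ((1 - n).toNat : ℕ) by omega, seq_one_sub_eq_backSeq hk (by omega)]
    exact backSeq_mem hk _
  by_cases hn' : n ≤ k
  · rw [seq_eq_gU hk (by omega) hn']
    exact of_mem_nonnegCone _
  have ih₁ := seq_mem_of_le_two_mul ko (n := n - 1) (by omega) (by omega)
  have ih₂ := seq_mem_of_le_two_mul ko (n := n + 1 - k) (by omega) (by omega)
  rcases Int.even_or_odd n with he | ho
  · rw [seq_eq_of_even hk ko (by omega) h2 he]
    exact mul_mem (of_mem_nonnegCone _)
      (add_mem (Ck_mem hk _) (mul_mem (mul_mem ih₁ (of_mem_nonnegCone _)) ih₂))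
  · rw [seq_eq_of_odd hk ko (by omega) h2 ho]
    exact mul_mem (add_mem (Ck_mem hk _) (mul_mem (mul_mem ih₂ (of_mem_nonnegCone _)) ih₁))
      (of_mem_nonnegCone _)
termination_by n.toNat
decreasing_by all_goals omega

def leadingTerm (n : ℤ) : KG k :=
  if Even n then gD⁻¹ * (gU 1)⁻¹ * gU k * gDbar * gU (n + 1 - k)
  else gU (n + 1 - k) * (gU 1)⁻¹ * gU k

theorem seq_sub_leadingTerm_of_even (ko : Odd k) {n : ℤ} (h1 : k + 1 ≤ n) (h2 : n ≤ 2 * k - 1)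
    (he : Even n) :
    seq hk n - of ℤ _ (leadingTerm n) = of ℤ _ (gU (n - k) * gD)⁻¹ * Ck k hk n +
      of ℤ _ (gU (n - k) * gD)⁻¹ * (seq hk (n - 1) - of ℤ _ (leadingTerm (n - 1))) *
        Dbark k * of ℤ _ (gU (n + 1 - k)) := by
  have hL : of ℤ _ (gU (n - k) * gD)⁻¹ * of ℤ _ (leadingTerm (n - 1)) * Dbark k *
      of ℤ _ (gU (n + 1 - k)) = of ℤ (KG k) (leadingTerm n) := by
    rw [leadingTerm, leadingTerm, if_neg (Int.not_even_iff_odd.mpr (he.sub_odd odd_one)),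
      if_pos he, Dbark_eq, ← map_mul, ← map_mul, ← map_mul, sub_add_cancel]
    group
  rw [seq_eq_of_even hk ko h1 (by omega) he, ← hL,
    seq_eq_gU hk (n := n + 1 - k) (by omega) (by omega)]
  noncomm_ring

theorem seq_sub_leadingTerm_of_odd (ko : Odd k) {n : ℤ} (h1 : k + 1 ≤ n) (h2 : n ≤ 2 * k - 1)
    (ho : Odd n) :
    seq hk n - of ℤ _ (leadingTerm n) = Ck k hk n * of ℤ _ (gDbar * gU (n - k))⁻¹ +
      of ℤ _ (gU (n + 1 - k)) * Dk k * (seq hk (n - 1) - of ℤ _ (leadingTerm (n - 1))) *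
        of ℤ _ (gDbar * gU (n - k))⁻¹ := by
  have hL : of ℤ _ (gU (n + 1 - k)) * Dk k * of ℤ _ (leadingTerm (n - 1)) *
      of ℤ _ (gDbar * gU (n - k))⁻¹ = of ℤ (KG k) (leadingTerm n) := by
    rw [leadingTerm, leadingTerm, if_pos (ho.sub_odd odd_one), if_neg (Int.not_even_iff_odd.mpr ho),
      Dk_eq, ← map_mul, ← map_mul, ← map_mul, sub_add_cancel]
    group
  rw [seq_eq_of_odd hk ko h1 (by omega) ho, ← hL,
    seq_eq_gU hk (n := n + 1 - k) (by omega) (by omega)]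
  noncomm_ring

theorem seq_sub_leadingTerm_mem (ko : Odd k) {n : ℤ} (h1 : k ≤ n) (h2 : n ≤ 2 * k - 1) :
    seq hk n - of ℤ _ (leadingTerm n) ∈ nonnegCone (KG k) := by
  rcases h1.eq_or_lt with rfl | h1
  · rw [leadingTerm, if_neg (Int.not_even_iff_odd.mpr (Int.odd_coe_nat k |>.mpr ko)),
      seq_eq_gU hk (by omega) le_rfl, add_sub_cancel_left, mul_inv_cancel, one_mul, sub_self]
    exact zero_mem _
  have ih := seq_sub_leadingTerm_mem ko (n := n - 1) (by omega) (by omega)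
  rcases Int.even_or_odd n with he | ho
  · rw [seq_sub_leadingTerm_of_even hk ko (by omega) (by omega) he]
    exact add_mem (mul_mem (of_mem_nonnegCone _) (Ck_mem hk _)) (mul_mem (mul_mem
      (mul_mem (of_mem_nonnegCone _) ih) (of_mem_nonnegCone _)) (of_mem_nonnegCone _))
  · rw [seq_sub_leadingTerm_of_odd hk ko (by omega) (by omega) ho]
    exact add_mem (mul_mem (Ck_mem hk _) (of_mem_nonnegCone _)) (mul_mem (mul_mem
      (mul_mem (of_mem_nonnegCone _) (of_mem_nonnegCone _)) ih) (of_mem_nonnegCone _))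
termination_by n.toNat
decreasing_by omega

theorem conserved_eq :
    conserved hk = of ℤ _ (gU 1)⁻¹ * (seq hk (2 - k) * Dk k + of ℤ _ (gU k * gDbar)) := by
  rw [conserved, show (2 : ℤ) - k = 1 - ((k - 1 : ℕ) : ℤ) by omega,
    seq_one_sub_eq_backSeq hk le_rfl]

theorem seq_two_sub_sub_mem (ko : Odd k) :
    seq hk (2 - k) - of ℤ _ (gU 1 * (gU k)⁻¹ * gU 1) ∈ nonnegCone (KG k) := by
  have h := mirror_mem_nonnegCone hk
    (seq_sub_leadingTerm_mem hk ko (n := 2 * k - 1) (by omega) le_rfl)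
  have ho : ¬Even (2 * (k : ℤ) - 1) := by simp only [Int.even_iff]; omega
  rwa [map_sub, ← seq_mirror hk ko, mirror_of, leadingTerm, if_neg ho,
    show 2 * (k : ℤ) - 1 + 1 - k = k by ring, show (k : ℤ) + 1 - (2 * k - 1) = 2 - k by ring,
    map_mul (mirrorHom hk), map_mul (mirrorHom hk), map_inv, mirrorHom_gU hk (by omega) le_rfl,
    mirrorHom_gU hk le_rfl (by omega), add_sub_cancel_left, show (k : ℤ) + 1 - 1 = k by ring] at h

theorem conserved_split_left (ko : Odd k) : ∃ P ∈ nonnegCone (KG k),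
    of ℤ _ gD⁻¹ * conserved hk = P + of ℤ _ (gD⁻¹ * (gU k)⁻¹ * gU 1 * gD) ∧
    of ℤ _ (gD⁻¹ * (gU k)⁻¹ * gU 1 * gD) * P - of ℤ _ (gD⁻¹ * gDbar) ∈
      nonnegCone (KG k) := by
  obtain ⟨r, hr, hs⟩ : ∃ r ∈ nonnegCone (KG k),
      seq hk (2 - k) = of ℤ _ (gU 1 * (gU k)⁻¹ * gU 1) + r :=
    ⟨_, seq_two_sub_sub_mem hk ko, (add_sub_cancel _ _).symm⟩
  refine ⟨of ℤ _ (gD⁻¹ * (gU 1)⁻¹) * (r * Dk k + of ℤ _ (gU k * gDbar)),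
    mul_mem (of_mem_nonnegCone _)
      (add_mem (mul_mem hr (of_mem_nonnegCone _)) (of_mem_nonnegCone _)),
    ?_, ?_⟩
  · have hq : of ℤ _ (gD⁻¹ * (gU 1)⁻¹) * of ℤ _ (gU 1 * (gU k)⁻¹ * gU 1) * Dk k =
        of ℤ (KG k) (gD⁻¹ * (gU k)⁻¹ * gU 1 * gD) := by
      simp only [Dk_eq, ← map_mul]; congr 1; group
    rw [conserved_eq, hs, ← hq, map_mul (of ℤ _) gD⁻¹]
    noncomm_ring
  · have h₁ : of ℤ _ (gD⁻¹ * (gU k)⁻¹ * gU 1 * gD) * of ℤ _ (gD⁻¹ * (gU 1)⁻¹) =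
        of ℤ (KG k) (gD⁻¹ * (gU k)⁻¹) := by
      rw [← map_mul]; congr 1; group
    have h₂ : of ℤ _ (gD⁻¹ * (gU k)⁻¹) * of ℤ _ (gU k * gDbar) =
        of ℤ (KG k) (gD⁻¹ * gDbar) := by
      rw [← map_mul]; congr 1; group
    have h : of ℤ _ (gD⁻¹ * (gU k)⁻¹ * gU 1 * gD) *
        (of ℤ _ (gD⁻¹ * (gU 1)⁻¹) * (r * Dk k + of ℤ _ (gU k * gDbar))) -
          of ℤ _ (gD⁻¹ * gDbar) =
        of ℤ _ (gD⁻¹ * (gU k)⁻¹) * r * Dk k := by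
      rw [← h₂, ← h₁]; noncomm_ring
    rw [h]
    exact mul_mem (mul_mem (of_mem_nonnegCone _) hr) (of_mem_nonnegCone _)

theorem conserved_split_right (ko : Odd k) :
    conserved hk * of ℤ _ gDbar⁻¹ = of ℤ _ ((gU 1)⁻¹ * gU k) +
      of ℤ _ (gU 1)⁻¹ * seq hk (2 - k) * of ℤ _ (gD * gDbar⁻¹) ∧
    of ℤ _ ((gU 1)⁻¹ * gU k) * (of ℤ _ (gU 1)⁻¹ * seq hk (2 - k) * of ℤ _ (gD * gDbar⁻¹)) -
      of ℤ _ (gD * gDbar⁻¹) ∈ nonnegCone (KG k) := by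
  obtain ⟨r, hr, hs⟩ : ∃ r ∈ nonnegCone (KG k),
      seq hk (2 - k) = of ℤ _ (gU 1 * (gU k)⁻¹ * gU 1) + r :=
    ⟨_, seq_two_sub_sub_mem hk ko, (add_sub_cancel _ _).symm⟩
  constructor
  · have h : of ℤ _ (gU 1)⁻¹ * of ℤ _ (gU k * gDbar) * of ℤ _ gDbar⁻¹ =
        of ℤ (KG k) ((gU 1)⁻¹ * gU k) := by
      simp only [← map_mul]; congr 1; group
    rw [conserved_eq, ← h, Dk_eq, map_mul (of ℤ _) gD]
    noncomm_ring
  · have hW : of ℤ (KG k) ((gU 1)⁻¹ * gU k) * of ℤ _ (gU 1)⁻¹ *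
        of ℤ _ (gU 1 * (gU k)⁻¹ * gU 1) * of ℤ _ (gD * gDbar⁻¹) = of ℤ _ (gD * gDbar⁻¹) := by
      simp only [← map_mul]; congr 1; group
    have h : of ℤ _ ((gU 1)⁻¹ * gU k) *
        (of ℤ _ (gU 1)⁻¹ * seq hk (2 - k) * of ℤ _ (gD * gDbar⁻¹)) - of ℤ _ (gD * gDbar⁻¹) =
        of ℤ _ ((gU 1)⁻¹ * gU k) * of ℤ _ (gU 1)⁻¹ * r * of ℤ _ (gD * gDbar⁻¹) := by
      calc _ = of ℤ (KG k) ((gU 1)⁻¹ * gU k) * of ℤ _ (gU 1)⁻¹ *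
              of ℤ _ (gU 1 * (gU k)⁻¹ * gU 1) * of ℤ _ (gD * gDbar⁻¹) +
            of ℤ _ ((gU 1)⁻¹ * gU k) * of ℤ _ (gU 1)⁻¹ * r * of ℤ _ (gD * gDbar⁻¹) -
            of ℤ _ (gD * gDbar⁻¹) := by rw [hs]; noncomm_ring
        _ = _ := by rw [hW]; noncomm_ring
    rw [h]
    exact mul_mem (mul_mem (mul_mem (of_mem_nonnegCone _) (of_mem_nonnegCone _)) hr)
      (of_mem_nonnegCone _)

theorem chain_start_mem_of_even (ko : Odd k) {n : ℤ} (h1 : k + 1 ≤ n) (h2 : n ≤ 2 * k - 1)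
    (he : Even n) : of ℤ _ (gD⁻¹ * (gU k)⁻¹ * gU 1 * gD) * seq hk n -
      of ℤ _ (gD⁻¹ * gDbar) * seq hk (n + 1 - k) ∈ nonnegCone (KG k) := by
  have hlead := seq_sub_leadingTerm_mem hk ko (n := n - 1) (by omega) (by omega)
  rw [leadingTerm, if_neg (Int.not_even_iff_odd.mpr (he.sub_odd odd_one)),
    show n - 1 + 1 - k = n - k by ring] at hlead
  obtain ⟨r, hr, hs⟩ : ∃ r ∈ nonnegCone (KG k),
      seq hk (n - 1) = of ℤ _ (gU (n - k) * (gU 1)⁻¹ * gU k) + r :=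
    ⟨_, hlead, (add_sub_cancel _ _).symm⟩
  have hw : of ℤ _ (gD⁻¹ * (gU k)⁻¹ * gU 1 * gD) * of ℤ _ (gU (n - k) * gD)⁻¹ *
      of ℤ _ (gU (n - k) * (gU 1)⁻¹ * gU k) * Dbark k = of ℤ (KG k) (gD⁻¹ * gDbar) := by
    simp only [Dbark_eq, ← map_mul]; congr 1; group
  have h : of ℤ _ (gD⁻¹ * (gU k)⁻¹ * gU 1 * gD) * seq hk n -
      of ℤ _ (gD⁻¹ * gDbar) * seq hk (n + 1 - k) =
      of ℤ _ (gD⁻¹ * (gU k)⁻¹ * gU 1 * gD) * of ℤ _ (gU (n - k) * gD)⁻¹ * Ck k hk n +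
      of ℤ _ (gD⁻¹ * (gU k)⁻¹ * gU 1 * gD) * of ℤ _ (gU (n - k) * gD)⁻¹ * r * Dbark k *
        seq hk (n + 1 - k) := by
    rw [seq_eq_of_even hk ko (by omega) (by omega) he, hs, ← hw]
    noncomm_ring
  rw [h]
  exact add_mem (mul_mem (mul_mem (of_mem_nonnegCone _) (of_mem_nonnegCone _)) (Ck_mem hk _))
    (mul_mem (mul_mem (mul_mem (mul_mem (of_mem_nonnegCone _) (of_mem_nonnegCone _)) hr)
      (of_mem_nonnegCone _)) (seq_mem_of_le_two_mul hk ko (by omega) (by omega)))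

theorem chain_start_mem_of_odd (ko : Odd k) {n : ℤ} (h1 : k + 1 ≤ n) (h2 : n ≤ 2 * k - 1)
    (ho : Odd n) : seq hk n * (of ℤ _ (gU 1)⁻¹ * seq hk (2 - k) * of ℤ _ (gD * gDbar⁻¹)) -
      seq hk (n + 1 - k) * of ℤ _ (gD * gDbar⁻¹) ∈ nonnegCone (KG k) := by
  have hlead := seq_sub_leadingTerm_mem hk ko (n := n) (by omega) (by omega)
  rw [leadingTerm, if_neg (Int.not_even_iff_odd.mpr ho)] at hlead
  obtain ⟨r, hr, hs⟩ : ∃ r ∈ nonnegCone (KG k),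
      seq hk n = of ℤ _ (gU (n + 1 - k) * (gU 1)⁻¹ * gU k) + r :=
    ⟨_, hlead, (add_sub_cancel _ _).symm⟩
  obtain ⟨r', hr', hs'⟩ : ∃ r ∈ nonnegCone (KG k),
      seq hk (2 - k) = of ℤ _ (gU 1 * (gU k)⁻¹ * gU 1) + r :=
    ⟨_, seq_two_sub_sub_mem hk ko, (add_sub_cancel _ _).symm⟩
  have hw : of ℤ _ (gU (n + 1 - k) * (gU 1)⁻¹ * gU k) * of ℤ _ (gU 1)⁻¹ *
      of ℤ _ (gU 1 * (gU k)⁻¹ * gU 1) = of ℤ (KG k) (gU (n + 1 - k)) := by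
    simp only [← map_mul]; congr 1; group
  have h : seq hk n * (of ℤ _ (gU 1)⁻¹ * seq hk (2 - k) * of ℤ _ (gD * gDbar⁻¹)) -
      seq hk (n + 1 - k) * of ℤ _ (gD * gDbar⁻¹) =
      r * (of ℤ _ (gU 1)⁻¹ * seq hk (2 - k) * of ℤ _ (gD * gDbar⁻¹)) +
      of ℤ _ (gU (n + 1 - k) * (gU 1)⁻¹ * gU k) * of ℤ _ (gU 1)⁻¹ * r' *
        of ℤ _ (gD * gDbar⁻¹) := by
    rw [hs, seq_eq_gU hk (n := n + 1 - k) (by omega) (by omega), ← hw, hs']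
    noncomm_ring
  rw [h]
  exact add_mem (mul_mem hr (mul_mem (mul_mem (of_mem_nonnegCone _)
      (seq_mem_of_le_two_mul hk ko (by omega) (by omega))) (of_mem_nonnegCone _)))
    (mul_mem (mul_mem (mul_mem (of_mem_nonnegCone _) (of_mem_nonnegCone _)) hr')
      (of_mem_nonnegCone _))

theorem seq_add_mul_mem_of_even (ko : Odd k) {n : ℤ} (h1 : k + 1 ≤ n) (h2 : n ≤ 2 * k - 1)
    (he : Even n) (j : ℕ) : seq hk (n + j * (k - 1)) ∈ nonnegCone (KG k) := by
  obtain ⟨P, hP, hH, hQP⟩ := conserved_split_left hk ko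
  have hrec (j : ℕ) : seq hk (n + ((j + 2 : ℕ) - 1) * (k - 1)) =
      (P + of ℤ _ (gD⁻¹ * (gU k)⁻¹ * gU 1 * gD)) *
        seq hk (n + ((j + 1 : ℕ) - 1) * (k - 1)) -
        of ℤ _ (gD⁻¹ * gDbar) * seq hk (n + (j - 1) * (k - 1)) := by
    have hj : 0 ≤ (j : ℤ) * (k - 1) := mul_nonneg j.cast_nonneg (by omega)
    rw [show n + ((j + 2 : ℕ) - 1) * (k - 1) = n + j * (k - 1) + (k - 1) by push_cast; ring,
      seq_add_of_even hk (by omega)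
        (by rw [add_assoc, ← add_one_mul, even_add_mul_pred_iff ko]; exact he),
      ← hH, show n + ((j + 1 : ℕ) - 1) * (k - 1) = n + j * (k - 1) by push_cast; ring,
      show n + j * (k - 1) + 1 - k = n + (j - 1) * (k - 1) by ring, map_mul (of ℤ _) gD⁻¹,
      Dbark_eq]
    noncomm_ring
  have e₀ : n + (((0 : ℕ) : ℤ) - 1) * (k - 1) = n + 1 - k := by push_cast; ring
  have e₁ : n + (((1 : ℕ) : ℤ) - 1) * (k - 1) = n := by push_cast; ring
  have := mem_of_linear_recurrence_left (nonnegCone (KG k))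
    (x := fun j : ℕ => seq hk (n + (j - 1) * (k - 1))) hP (of_mem_nonnegCone _) hQP hrec
    (by rw [e₁]; exact seq_mem_of_le_two_mul hk ko (by omega) (by omega))
    (by rw [e₀, e₁]; exact chain_start_mem_of_even hk ko h1 h2 he) j
  simpa using this

theorem seq_add_mul_mem_of_odd (ko : Odd k) {n : ℤ} (h1 : k + 1 ≤ n) (h2 : n ≤ 2 * k - 1)
    (ho : Odd n) (j : ℕ) : seq hk (n + j * (k - 1)) ∈ nonnegCone (KG k) := by
  obtain ⟨hH, hPQ⟩ := conserved_split_right hk ko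
  have hrec (j : ℕ) : seq hk (n + ((j + 2 : ℕ) - 1) * (k - 1)) =
      seq hk (n + ((j + 1 : ℕ) - 1) * (k - 1)) * (of ℤ _ ((gU 1)⁻¹ * gU k) +
        of ℤ _ (gU 1)⁻¹ * seq hk (2 - k) * of ℤ _ (gD * gDbar⁻¹)) -
        seq hk (n + (j - 1) * (k - 1)) * of ℤ _ (gD * gDbar⁻¹) := by
    have hj : 0 ≤ (j : ℤ) * (k - 1) := mul_nonneg j.cast_nonneg (by omega)
    have hN : Odd (n + j * (k - 1) + (k - 1)) := by
      rw [add_assoc, ← add_one_mul, ← Int.not_even_iff_odd, even_add_mul_pred_iff ko]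
      exact Int.not_even_iff_odd.mpr ho
    rw [show n + ((j + 2 : ℕ) - 1) * (k - 1) = n + j * (k - 1) + (k - 1) by push_cast; ring,
      seq_add_of_odd hk (by omega) hN, ← hH,
      show n + ((j + 1 : ℕ) - 1) * (k - 1) = n + j * (k - 1) by push_cast; ring,
      show n + j * (k - 1) + 1 - k = n + (j - 1) * (k - 1) by ring, map_mul (of ℤ _) gD, Dk_eq]
    noncomm_ring
  have e₀ : n + (((0 : ℕ) : ℤ) - 1) * (k - 1) = n + 1 - k := by push_cast; ring
  have e₁ : n + (((1 : ℕ) : ℤ) - 1) * (k - 1) = n := by push_cast; ring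
  have := mem_of_linear_recurrence_right (nonnegCone (KG k))
    (x := fun j : ℕ => seq hk (n + (j - 1) * (k - 1))) (of_mem_nonnegCone _)
    (mul_mem (mul_mem (of_mem_nonnegCone _) (seq_mem_of_le_two_mul hk ko (by omega) (by omega)))
      (of_mem_nonnegCone _)) hPQ hrec
    (by rw [e₁]; exact seq_mem_of_le_two_mul hk ko (by omega) (by omega))
    (by rw [e₀, e₁]; exact chain_start_mem_of_odd hk ko h1 h2 ho) j
  simpa using this

theorem seq_mem_of_two_sub_le (ko : Odd k) {n : ℤ} (hn : 2 - k ≤ n) :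
    seq hk n ∈ nonnegCone (KG k) := by
  by_cases hmid : n ≤ 2 * k
  · exact seq_mem_of_le_two_mul hk ko hn hmid
  obtain ⟨m, j, hm1, hm2, rfl⟩ :
      ∃ (m : ℤ) (j : ℕ), k + 1 ≤ m ∧ m ≤ 2 * k - 1 ∧ n = m + j * (k - 1) := by
    have := Int.emod_nonneg (n - k - 1) (by omega : (k : ℤ) - 1 ≠ 0)
    have := Int.emod_lt_of_pos (n - k - 1) (by omega : (0 : ℤ) < k - 1)
    refine ⟨k + 1 + (n - k - 1) % (k - 1), ((n - k - 1) / (k - 1)).toNat, by omega, by omega,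
      ?_⟩
    rw [Int.toNat_of_nonneg (Int.ediv_nonneg (by omega) (by omega))]
    linarith [Int.emod_add_mul_ediv (n - k - 1) (k - 1)]
  rcases Int.even_or_odd m with he | ho
  · exact seq_add_mul_mem_of_even hk ko hm1 hm2 he j
  · exact seq_add_mul_mem_of_odd hk ko hm1 hm2 ho j

theorem seq_mem (ko : Odd k) (n : ℤ) : seq hk n ∈ nonnegCone (KG k) := by
  by_cases hn : n < 2 - k
  · rw [seq_eq_mirror_of_lt hk hn]
    exact mirror_mem_nonnegCone hk (seq_mem_of_two_sub_le hk ko (by omega))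
  · exact seq_mem_of_two_sub_le hk ko (by omega)

end KontsevichRecursion

/-- For odd `k ≥ 3`, the noncommutative recursion
`U_{n-k} D U_n = C_n + U_{n-1} D̄ U_{n+1-k}` (`n` even),
`U_n D̄ U_{n-k} = C_n + U_{n+1-k} D U_{n-1}` (`n` odd)
has a solution `(u_n)_{n ∈ ℤ}` in `ℤ F_{2k+1}` extending the free generators
`U_1, …, U_k`, each `u_n` being a finite sum of elements of the free group; moreover
there is a conserved quantity `H ∈ ℤ F_{2k+1}` with
`D̄ u_{n+1-k} + D u_{n+k-1} = H u_n` (`n` even) and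
`u_{n+1-k} D + u_{n+k-1} D̄ = u_n H` (`n` odd). -/
theorem kontsevich_recursion (k : ℕ) (hk : 3 ≤ k) (hodd : Odd k) :
    ∃ u : ℤ → KAlg k,
      (∀ (n : ℤ) (h1 : 1 ≤ n) (h2 : n ≤ (k : ℤ)),
        u n = MonoidAlgebra.of ℤ (KG k)
          (FreeGroup.of (KGen.U ⟨(n - 1).toNat, by omega⟩))) ∧
      (∀ n : ℤ, ∃ s : Multiset (KG k),
        u n = (s.map (fun g => MonoidAlgebra.of ℤ (KG k) g)).sum) ∧
      (∀ n : ℤ,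
        (Even n →
          u (n - k) * Dk k * u n = Ck k hk n + u (n - 1) * Dbark k * u (n + 1 - k)) ∧
        (Odd n →
          u n * Dbark k * u (n - k) = Ck k hk n + u (n + 1 - k) * Dk k * u (n - 1))) ∧
      ∃ H : KAlg k,
        ∀ n : ℤ,
          (Even n → Dbark k * u (n + 1 - k) + Dk k * u (n + k - 1) = H * u n) ∧
          (Odd n → u (n + 1 - k) * Dk k + u (n + k - 1) * Dbark k = u n * H) := by
  refine ⟨KontsevichRecursion.seq hk, fun n h1 h2 => ?_,
    fun n =>
      MonoidAlgebra.exists_multiset_of_mem_nonnegCone (KontsevichRecursion.seq_mem hk hodd n),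
    KontsevichRecursion.quadRel_seq hk hodd, KontsevichRecursion.conserved hk,
    KontsevichRecursion.linRel_seq hk hodd⟩
  exact (KontsevichRecursion.seq_eq_gU hk h1 h2).trans
    (congrArg _ (KontsevichRecursion.gU_eq (by omega)))
end
end
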